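/- Every shrewd cardinal is weakly shrewd. -/

import Mathlib

universe u

open Cardinal

/-- Formulas of the language of set theory with an additional unary predicate
symbol `pred`; variables are indexed by natural numbers. -/
inductive SF : Type
  | mem : ℕ → ℕ → SF
  | eq : ℕ → ℕ → SF
  | pred : ℕ → SF
  | not : SF → SF
  | and : SF → SF → SF
  | ex : ℕ → SF → SF

/-- The free variables of a formula. -/
def SF.fv : SF → Set ℕ
  | .mem i j => {i, j}
  | .eq i j => {i, j}
  | .pred i => {i}
  | .not φ => φ.fv
  | .and φ ψ => φ.fv ∪ ψ.fv
  | .ex k φ => φ.fv \ {k}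

/-- Tarskian satisfaction of a formula in the structure whose carrier is the
class `S`, where the membership symbol is interpreted by the binary relation `E`
and the extra unary predicate symbol by the class `P`, under the valuation `v`. -/
def Sat (P : Set ZFSet.{u}) (E : ZFSet.{u} → ZFSet.{u} → Prop) (S : Set ZFSet.{u}) :
    SF → (ℕ → ZFSet.{u}) → Prop
  | .mem i j, v => E (v i) (v j)
  | .eq i j, v => v i = v j
  | .pred i, v => v i ∈ P
  | .not φ, v => ¬ Sat P E S φ v
  | .and φ ψ, v => Sat P E S φ v ∧ Sat P E S ψ v
  | .ex k φ, v => ∃ x, x ∈ S ∧ Sat P E S φ (Function.update v k x)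

/-- Satisfaction in the `∈`-structure with carrier `S`, the predicate symbol
being interpreted by the class `R`. -/
def SatIn (R : Set ZFSet.{u}) (S : Set ZFSet.{u}) (φ : SF) (v : ℕ → ZFSet.{u}) : Prop :=
  Sat R (· ∈ ·) S φ v

/-- Δ₀-formulas: built from atomic formulas by propositional connectives and
bounded existential quantification. -/
inductive IsDeltaZero : SF → Prop
  | mem (i j) : IsDeltaZero (.mem i j)
  | eq (i j) : IsDeltaZero (.eq i j)
  | pred (i) : IsDeltaZero (.pred i)
  | not {φ} : IsDeltaZero φ → IsDeltaZero (.not φ)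
  | and {φ ψ} : IsDeltaZero φ → IsDeltaZero ψ → IsDeltaZero (.and φ ψ)
  | bex {φ} (k j) : IsDeltaZero φ → IsDeltaZero (.ex k (.and (.mem k j) φ))

mutual
  /-- Σₙ-formulas of the Lévy hierarchy. -/
  inductive IsSigma : ℕ → SF → Prop
    | of_zero {φ} : IsDeltaZero φ → IsSigma 0 φ
    | of_pi {n φ} : IsPi n φ → IsSigma (n + 1) φ
    | ex {n φ} (k) : IsSigma (n + 1) φ → IsSigma (n + 1) (.ex k φ)
  /-- Πₙ-formulas of the Lévy hierarchy. -/
  inductive IsPi : ℕ → SF → Prop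
    | of_zero {φ} : IsDeltaZero φ → IsPi 0 φ
    | not {n φ} : IsSigma (n + 1) φ → IsPi (n + 1) (.not φ)
end

/-- The valuation sending `v₀` to `a`, `v₁` to `b` and all other variables to `∅`. -/
def val2 (a b : ZFSet.{u}) : ℕ → ZFSet.{u} := fun i => if i = 0 then a else if i = 1 then b else ∅

/-- `x` is a (von Neumann) ordinal. -/
def ZOrd (x : ZFSet.{u}) : Prop := x.IsTransitive ∧ ∀ y ∈ x, ZFSet.IsTransitive y

/-- `κ` is a (von Neumann) cardinal. -/
def ZCard (κ : ZFSet.{u}) : Prop := ZOrd κ ∧ ∀ β ∈ κ, #β.toSet < #κ.toSet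

/-- `κ` is an infinite cardinal. -/
def InfCard (κ : ZFSet.{u}) : Prop := ZCard κ ∧ ZFSet.omega ⊆ κ

/-- `κ` is an infinite regular cardinal: every cofinal subset of `κ` has
cardinality `κ`. -/
def ZRegular (κ : ZFSet.{u}) : Prop :=
  InfCard κ ∧ ∀ x : ZFSet.{u}, x ⊆ κ →
    (∀ β ∈ κ, ∃ γ ∈ x, β ∈ γ ∨ β = γ) → #x.toSet = #κ.toSet

/-- `C` is a closed unbounded (class of) subset(s) of the ordinal `κ`. -/
def ZClub (C : Set ZFSet.{u}) (κ : ZFSet.{u}) : Prop :=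
  (∀ γ ∈ C, γ ∈ κ) ∧ (∀ β ∈ κ, ∃ γ ∈ C, β ∈ γ) ∧
    (∀ β ∈ κ, (∃ γ, γ ∈ β) → (∀ γ ∈ β, ∃ δ ∈ C, γ ∈ δ ∧ δ ∈ β) → β ∈ C)

/-- `S` is stationary in `κ`: it meets every closed unbounded subset of `κ`. -/
def ZStationary (S : Set ZFSet.{u}) (κ : ZFSet.{u}) : Prop :=
  ∀ C, ZClub C κ → ∃ γ ∈ C, γ ∈ S

/-- `H(θ)`: the class of all sets hereditarily of cardinality less than `θ`. -/
def HSet (θ : ZFSet.{u}) : Set ZFSet.{u} :=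
  {x | ∃ t : ZFSet.{u}, t.IsTransitive ∧ x ⊆ t ∧ #t.toSet < #θ.toSet}

/-- `θ` is the cardinal successor `κ⁺` of `κ`. -/
def SuccCardOf (θ κ : ZFSet.{u}) : Prop :=
  ZCard θ ∧ κ ∈ θ ∧ ∀ μ, ZCard μ → κ ∈ μ → θ ⊆ μ

/-- `κ` is a weakly shrewd cardinal. -/
def WeaklyShrewd (κ : ZFSet.{u}) : Prop :=
  InfCard κ ∧
    ∀ (φ : SF) (θ A : ZFSet.{u}), φ.fv ⊆ {0, 1} → ZCard θ → κ ∈ θ → A ⊆ κ →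
      SatIn ∅ (HSet θ) φ (val2 A κ) →
      ∃ κ' θ' : ZFSet.{u}, ZCard κ' ∧ ZCard θ' ∧ κ' ∈ θ' ∧ κ' ∈ κ ∧
        SatIn ∅ (HSet θ') φ (val2 (A ∩ κ') κ')

/-- `j` is an elementary embedding of the `∈`-structure (with predicate `R`)
with carrier `X` into the one with carrier `Y`. -/
def ElemEmbOn (R : Set ZFSet.{u}) (X Y : Set ZFSet.{u}) (j : ZFSet.{u} → ZFSet.{u}) : Prop :=
  (∀ x ∈ X, j x ∈ Y) ∧
    ∀ (φ : SF) (v : ℕ → ZFSet.{u}), (∀ i, v i ∈ X) →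
      (SatIn R X φ v ↔ SatIn R Y φ (fun i => j (v i)))

/-- `X` is an elementary submodel of `Y` (as `∈`-structures with predicate `R`). -/
def ElemSub (R : Set ZFSet.{u}) (X Y : Set ZFSet.{u}) : Prop :=
  X ⊆ Y ∧ ∀ (φ : SF) (v : ℕ → ZFSet.{u}), (∀ i, v i ∈ X) → (SatIn R X φ v ↔ SatIn R Y φ v)

/-- `X` is a Σₙ-elementary submodel of `Y`. -/
def SigmaElemSub (R : Set ZFSet.{u}) (n : ℕ) (X Y : Set ZFSet.{u}) : Prop :=
  X ⊆ Y ∧ ∀ (φ : SF), IsSigma n φ → ∀ (v : ℕ → ZFSet.{u}), (∀ i, v i ∈ X) →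
    (SatIn R X φ v ↔ SatIn R Y φ v)

/-- The stages of the von Neumann hierarchy, as classes:
`Vclass o` consists of all sets of rank less than `o`. -/
def Vclass (o : Ordinal.{u}) : Set ZFSet.{u} := {x | ZFSet.rank x < o}

/-- The intersection `A ∩ V_c` (for `c` an ordinal). -/
def Vres (A c : ZFSet.{u}) : ZFSet.{u} :=
  ZFSet.sep (fun y => ZFSet.rank y < ZFSet.rank c) A

/-- `κ` is a shrewd cardinal (Rathjen): for every formula `Φ(v₀,v₁)`, every
ordinal `α` and every `A ⊆ V_κ` such that `Φ(A,κ)` holds in `V_{κ+α}`, there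
are ordinals `κ̄, ᾱ < κ` such that `Φ(A ∩ V_κ̄, κ̄)` holds in `V_{κ̄+ᾱ}`. -/
def Shrewd (κ : ZFSet.{u}) : Prop :=
  ZCard κ ∧
    ∀ (φ : SF) (α A : ZFSet.{u}), φ.fv ⊆ {0, 1} → ZOrd α →
      (∀ y ∈ A, ZFSet.rank y < ZFSet.rank κ) →
      SatIn ∅ (Vclass (ZFSet.rank κ + ZFSet.rank α)) φ (val2 A κ) →
      ∃ κ' α' : ZFSet.{u}, κ' ∈ κ ∧ α' ∈ κ ∧
        SatIn ∅ (Vclass (ZFSet.rank κ' + ZFSet.rank α')) φ (val2 (Vres A κ') κ')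

/-!
Let `H(θ) ⊨ φ(A, κ)` with `θ > κ` a cardinal and `A ⊆ κ`. Put `β = κ + θ + ω`. Since `β` is a limit,
`V_β` computes correctly the cardinality comparisons between its members (an injection of `t` into
`w` is coded by a set of rank `< max(rank t, rank w) + 3`), hence also "is a cardinal" and
membership in `H(θ)` (a transitive set of size `< θ` has rank `< θ`). So `V_β` satisfies
"`V` has no largest rank, `κ` is a cardinal and some cardinal `θ > κ` has `H(θ) ⊨ φ(A, κ)`".
Shrewdness reflects this to some `V_{κ̄+ᾱ}` with `κ̄ < κ`, which then yields a cardinal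
`θ̄ > κ̄` with `H(θ̄) ⊨ φ(A ∩ κ̄, κ̄)`, as `A ∩ V_κ̄ = A ∩ κ̄`. That `κ` is infinite is reflected
too: `rank κ` has no largest element.
-/
open ZFSet Function Order SF

namespace SF

def or (φ ψ : SF) : SF := .not (.and (.not φ) (.not ψ))
def imp (φ ψ : SF) : SF := .not (.and φ (.not ψ))
def all (k : ℕ) (φ : SF) : SF := .not (.ex k (.not φ))
def bex (k j : ℕ) (φ : SF) : SF := .ex k (.and (.mem k j) φ)
def ball (k j : ℕ) (φ : SF) : SF := .not (bex k j (.not φ))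

def bvBound : SF → ℕ
  | .ex k φ => max (k + 1) φ.bvBound
  | .not φ => φ.bvBound
  | .and φ ψ => max φ.bvBound ψ.bvBound
  | .mem _ _ | .eq _ _ | .pred _ => 0

end SF

section Satisfaction

variable {R S : Set ZFSet.{u}} {φ ψ : SF} {v : ℕ → ZFSet.{u}}

@[simp] lemma satIn_mem {i j : ℕ} : SatIn R S (.mem i j) v ↔ v i ∈ v j := Iff.rfl
@[simp] lemma satIn_eq {i j : ℕ} : SatIn R S (.eq i j) v ↔ v i = v j := Iff.rfl
@[simp] lemma satIn_not : SatIn R S (.not φ) v ↔ ¬ SatIn R S φ v := Iff.rfl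
@[simp] lemma satIn_and : SatIn R S (.and φ ψ) v ↔ SatIn R S φ v ∧ SatIn R S ψ v := Iff.rfl
@[simp] lemma satIn_ex {k : ℕ} :
    SatIn R S (.ex k φ) v ↔ ∃ x ∈ S, SatIn R S φ (update v k x) := Iff.rfl

@[simp] lemma satIn_or : SatIn R S (φ.or ψ) v ↔ SatIn R S φ v ∨ SatIn R S ψ v := by
  simp [SF.or, or_iff_not_and_not]
@[simp] lemma satIn_imp : SatIn R S (φ.imp ψ) v ↔ (SatIn R S φ v → SatIn R S ψ v) := by
  simp [SF.imp]
@[simp] lemma satIn_all {k : ℕ} :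
    SatIn R S (φ.all k) v ↔ ∀ x ∈ S, SatIn R S φ (update v k x) := by
  simp [SF.all]

lemma satIn_bex {k j : ℕ} (hkj : k ≠ j) :
    SatIn R S (.bex k j φ) v ↔ ∃ x ∈ S, x ∈ v j ∧ SatIn R S φ (update v k x) := by
  simp [SF.bex, update_of_ne hkj.symm]

lemma satIn_ball {k j : ℕ} (hkj : k ≠ j) :
    SatIn R S (.ball k j φ) v ↔ ∀ x ∈ S, x ∈ v j → SatIn R S φ (update v k x) := by
  simp [SF.ball, satIn_bex hkj]

lemma satIn_congr : ∀ (φ : SF) {v w : ℕ → ZFSet.{u}},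
    (∀ i ∈ φ.fv, v i = w i) → (SatIn R S φ v ↔ SatIn R S φ w)
  | .mem i j, v, w, h => by simp [h i (by simp [SF.fv]), h j (by simp [SF.fv])]
  | .eq i j, v, w, h => by simp [h i (by simp [SF.fv]), h j (by simp [SF.fv])]
  | .pred i, v, w, h => by
      change v i ∈ R ↔ w i ∈ R
      rw [h i (by simp [SF.fv])]
  | .not φ, v, w, h => not_congr (satIn_congr φ h)
  | .and φ ψ, v, w, h => and_congr (satIn_congr φ fun i hi => h i (.inl hi))
      (satIn_congr ψ fun i hi => h i (.inr hi))
  | .ex k φ, v, w, h => exists_congr fun x => and_congr_right fun _ =>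
      satIn_congr φ fun i hi => by
        rcases eq_or_ne i k with rfl | hik
        · simp
        · simpa [update_of_ne hik] using h i ⟨hi, hik⟩

end Satisfaction

theorem IsDeltaZero.satIn_iff {R S : Set ZFSet.{u}} (hS : ∀ x ∈ S, ∀ y ∈ x, y ∈ S) {φ : SF}
    (hφ : IsDeltaZero φ) {v : ℕ → ZFSet.{u}} (hv : ∀ i, v i ∈ S) :
    SatIn R S φ v ↔ SatIn R Set.univ φ v := by
  induction hφ generalizing v with
  | mem | eq | pred => rfl
  | not _ ih => exact not_congr (ih hv)
  | and _ _ ih₁ ih₂ => exact and_congr (ih₁ hv) (ih₂ hv)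
  | @bex φ k j _ ih =>
    have hupd : ∀ x ∈ S, ∀ i, update v k x i ∈ S := fun x hx i => by
      rcases eq_or_ne i k with rfl | hik
      · simpa
      · simpa [update_of_ne hik] using hv i
    simp only [satIn_ex, satIn_and, satIn_mem, update_self, Set.mem_univ, true_and]
    refine ⟨fun ⟨x, hx, hxj, h⟩ => ⟨x, hxj, (ih (hupd x hx)).1 h⟩,
      fun ⟨x, hxj, h⟩ => ?_⟩
    have hx : x ∈ S := by
      rcases eq_or_ne j k with rfl | hjk
      · exact absurd (by simpa using hxj) (mem_irrefl x)
      · exact hS _ (hv j) x (by simpa [update_of_ne hjk] using hxj)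
    exact ⟨x, hx, hxj, (ih (hupd x hx)).2 h⟩

namespace IsDeltaZero

lemma or {φ ψ : SF} (hφ : IsDeltaZero φ) (hψ : IsDeltaZero ψ) : IsDeltaZero (φ.or ψ) :=
  .not (.and hφ.not hψ.not)

lemma imp {φ ψ : SF} (hφ : IsDeltaZero φ) (hψ : IsDeltaZero ψ) : IsDeltaZero (φ.imp ψ) :=
  .not (.and hφ hψ.not)

lemma ball {φ : SF} (k j : ℕ) (hφ : IsDeltaZero φ) : IsDeltaZero (φ.ball k j) :=
  .not (.bex k j hφ.not)

end IsDeltaZero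

-- In the formulas below the variables from `n` on are bound, so their semantics only needs
-- the free variables to lie below `n`.

section Bounded

def isTransitiveF (x n : ℕ) : SF := ball n x (ball (n + 1) n (.mem (n + 1) x))

def isOrdinalF (x n : ℕ) : SF := (isTransitiveF x n).and (ball n x (isTransitiveF n (n + 1)))

def subsetF (x y n : ℕ) : SF := ball n x (.mem n y)

def upairEqF (z a b n : ℕ) : SF :=
  (ball n z ((SF.eq n a).or (.eq n b))).and ((SF.mem a z).and (.mem b z))

def pairEqF (p a b n : ℕ) : SF :=
  bex n p (bex (n + 1) p ((upairEqF n a a (n + 2)).and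
    ((upairEqF (n + 1) a b (n + 2)).and (upairEqF p n (n + 1) (n + 2)))))

def pairMemF (a b f n : ℕ) : SF := bex n f (pairEqF n a b (n + 1))

def injCodeF (f t w n : ℕ) : SF :=
  (ball n t (bex (n + 1) w (pairMemF n (n + 1) f (n + 2)))).and
    (ball n t (ball (n + 1) t (ball (n + 2) w
      (((pairMemF n (n + 2) f (n + 3)).and (pairMemF (n + 1) (n + 2) f (n + 3))).imp
        (.eq n (n + 1))))))

lemma isDeltaZero_isTransitiveF (x n : ℕ) : IsDeltaZero (isTransitiveF x n) :=
  .ball _ _ (.ball _ _ (.mem _ _))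

lemma isDeltaZero_isOrdinalF (x n : ℕ) : IsDeltaZero (isOrdinalF x n) :=
  .and (isDeltaZero_isTransitiveF _ _) (.ball _ _ (isDeltaZero_isTransitiveF _ _))

lemma isDeltaZero_subsetF (x y n : ℕ) : IsDeltaZero (subsetF x y n) := .ball _ _ (.mem _ _)

lemma isDeltaZero_upairEqF (z a b n : ℕ) : IsDeltaZero (upairEqF z a b n) :=
  .and (.ball _ _ (.or (.eq _ _) (.eq _ _))) (.and (.mem _ _) (.mem _ _))

lemma isDeltaZero_pairEqF (p a b n : ℕ) : IsDeltaZero (pairEqF p a b n) :=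
  .bex _ _ (.bex _ _ (.and (isDeltaZero_upairEqF ..) (.and (isDeltaZero_upairEqF ..)
    (isDeltaZero_upairEqF ..))))

lemma isDeltaZero_pairMemF (a b f n : ℕ) : IsDeltaZero (pairMemF a b f n) :=
  .bex _ _ (isDeltaZero_pairEqF ..)

lemma isDeltaZero_injCodeF (f t w n : ℕ) : IsDeltaZero (injCodeF f t w n) :=
  .and (.ball _ _ (.bex _ _ (isDeltaZero_pairMemF ..)))
    (.ball _ _ (.ball _ _ (.ball _ _ (.imp (.and (isDeltaZero_pairMemF ..)
      (isDeltaZero_pairMemF ..)) (.eq _ _)))))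

variable {R : Set ZFSet.{u}} {v : ℕ → ZFSet.{u}}

lemma satIn_isTransitiveF {x n : ℕ} (hx : x < n) :
    SatIn R Set.univ (isTransitiveF x n) v ↔ (v x).IsTransitive := by
  simp (disch := omega) [isTransitiveF, satIn_ball, update_of_ne, IsTransitive, subset_def]

lemma satIn_isOrdinalF {x n : ℕ} (hx : x < n) :
    SatIn R Set.univ (isOrdinalF x n) v ↔ ZOrd (v x) := by
  simp (disch := omega) [isOrdinalF, satIn_ball, satIn_isTransitiveF, ZOrd]

lemma satIn_subsetF {x y n : ℕ} (hx : x < n) (hy : y < n) :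
    SatIn R Set.univ (subsetF x y n) v ↔ v x ⊆ v y := by
  simp (disch := omega) [subsetF, satIn_ball, update_of_ne, subset_def]

lemma satIn_upairEqF {z a b n : ℕ} (hz : z < n) (ha : a < n) (hb : b < n) :
    SatIn R Set.univ (upairEqF z a b n) v ↔ v z = {v a, v b} := by
  simp (disch := omega) only [upairEqF, satIn_ball, satIn_and, satIn_or, satIn_eq, satIn_mem,
    update_self, update_of_ne, Set.mem_univ, forall_const]
  refine ⟨fun ⟨h, ha, hb⟩ => ZFSet.ext fun c => ?_, fun h => by simp [h]⟩
  rw [mem_pair]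
  exact ⟨h c, by rintro (rfl | rfl) <;> assumption⟩

lemma satIn_pairEqF {p a b n : ℕ} (hp : p < n) (ha : a < n) (hb : b < n) :
    SatIn R Set.univ (pairEqF p a b n) v ↔ v p = pair (v a) (v b) := by
  simp (disch := omega) only [pairEqF, satIn_bex, satIn_and, satIn_upairEqF, update_self,
    update_of_ne, Set.mem_univ, true_and, pair_eq_singleton]
  constructor
  · rintro ⟨_, -, _, -, rfl, rfl, h⟩
    exact h
  · intro h
    exact ⟨_, by simp [h, pair], _, by simp [h, pair], rfl, rfl, h⟩

lemma satIn_pairMemF {a b f n : ℕ} (ha : a < n) (hb : b < n) (hf : f < n) :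
    SatIn R Set.univ (pairMemF a b f n) v ↔ pair (v a) (v b) ∈ v f := by
  simp (disch := omega) [pairMemF, satIn_bex, satIn_pairEqF, update_of_ne]

def IsInjCode (f t w : ZFSet.{u}) : Prop :=
  (∀ a ∈ t, ∃ b ∈ w, pair a b ∈ f) ∧
    ∀ a ∈ t, ∀ a' ∈ t, ∀ b ∈ w, pair a b ∈ f → pair a' b ∈ f → a = a'

lemma satIn_injCodeF {f t w n : ℕ} (hf : f < n) (ht : t < n) (hw : w < n) :
    SatIn R Set.univ (injCodeF f t w n) v ↔ IsInjCode (v f) (v t) (v w) := by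
  simp (disch := omega) [injCodeF, satIn_ball, satIn_bex, satIn_pairMemF, update_of_ne,
    IsInjCode]

end Bounded

section Ordinals

variable {x κ : ZFSet.{u}}

lemma zOrd_iff_isOrdinal : ZOrd x ↔ x.IsOrdinal := isOrdinal_iff_forall_mem_isTransitive.symm

lemma zOrd_empty : ZOrd (∅ : ZFSet.{u}) := zOrd_iff_isOrdinal.2 isOrdinal_empty

lemma mk_ofNat_eq_toZFSet : ∀ n : ℕ, (mk (PSet.ofNat n) : ZFSet.{u}) = (n : Ordinal).toZFSet
  | 0 => by rw [Nat.cast_zero, Ordinal.toZFSet_zero]; rfl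
  | n + 1 => by
    rw [Nat.cast_succ, Ordinal.toZFSet_add_one, ← mk_ofNat_eq_toZFSet n]
    rfl

lemma exists_eq_toZFSet_of_mem_omega (hx : x ∈ ZFSet.omega) :
    ∃ n : ℕ, x = (n : Ordinal).toZFSet := by
  induction x using Quotient.inductionOn with
  | _ x =>
    obtain ⟨⟨n⟩, hn⟩ := hx
    exact ⟨n, (Quotient.sound hn).trans (mk_ofNat_eq_toZFSet n)⟩

lemma omega_subset_of_omega0_le (hκ : ZOrd κ) (h : Ordinal.omega0 ≤ rank κ) : ZFSet.omega ⊆ κ := by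
  intro x hx
  obtain ⟨n, rfl⟩ := exists_eq_toZFSet_of_mem_omega hx
  rw [← (isOrdinal_toZFSet _).rank_lt_iff_mem (zOrd_iff_isOrdinal.1 hκ),
    Ordinal.rank_toZFSet]
  exact (Ordinal.natCast_lt_omega0 n).trans_le h

lemma Vres_eq_inter {A c : ZFSet.{u}} (hc : c.IsOrdinal) (hA : ∀ y ∈ A, y.IsOrdinal) :
    Vres A c = A ∩ c := by
  ext y
  simp only [Vres, mem_sep, mem_inter]
  exact and_congr_right fun hy => (hA y hy).rank_lt_iff_mem hc

end Ordinals

section RankAndCardinality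

variable {t w x θ : ZFSet.{u}} {β : Ordinal.{u}}

lemma IsInjCode.mk_le {f : ZFSet.{u}} (h : IsInjCode f t w) : #t.toSet ≤ #w.toSet := by
  choose g hgw hgf using h.1
  refine mk_le_of_injective (f := fun a : t.toSet => (⟨g a a.2, hgw _ _⟩ : w.toSet)) ?_
  rintro ⟨a, ha⟩ ⟨a', ha'⟩ hg
  simp only [Subtype.mk.injEq] at hg
  exact Subtype.ext (h.2 a ha a' ha' _ (hgw a ha) (hgf a ha) (hg ▸ hgf a' ha'))

lemma exists_isInjCode_subset (h : #t.toSet ≤ #w.toSet) :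
    ∃ f, IsInjCode f t w ∧ f ⊆ powerset (powerset (t ∪ w)) := by
  obtain ⟨g⟩ := h
  refine ⟨pairSep (fun a b => ∃ ha : a ∈ t, b = g ⟨a, ha⟩) t w, ⟨fun a ha => ?_, ?_⟩,
    fun _ hz => (mem_sep.1 hz).1⟩
  · exact ⟨g ⟨a, ha⟩, (g ⟨a, ha⟩).2, mem_pairSep.2 ⟨a, ha, _, (g ⟨a, ha⟩).2, rfl, ha, rfl⟩⟩
  · intro a ha a' ha' b _ hab ha'b
    obtain ⟨_, _, _, _, he, _, rfl⟩ := mem_pairSep.1 hab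
    obtain ⟨_, _, _, _, he', _, hb'⟩ := mem_pairSep.1 ha'b
    obtain ⟨rfl, rfl⟩ := pair_inj.1 he
    obtain ⟨rfl, rfl⟩ := pair_inj.1 he'
    exact congrArg Subtype.val (g.injective (Subtype.ext hb'))

lemma ZFSet.IsTransitive.exists_mem_rank_eq (ht : t.IsTransitive) {o : Ordinal.{u}}
    (ho : o < rank t) :
    ∃ z ∈ t, rank z = o := by
  suffices ∀ x ∈ t, o ≤ rank x → ∃ z ∈ t, rank z = o by
    obtain ⟨x, hx, hox⟩ := lt_rank_iff.1 ho
    exact this x hx hox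
  intro x
  induction x using mem_wf.induction with
  | _ x ih =>
    intro hx hox
    rcases hox.eq_or_lt with rfl | hox
    · exact ⟨x, hx, rfl⟩
    · obtain ⟨y, hy, hoy⟩ := lt_rank_iff.1 hox
      exact ih y hy (ht.mem_trans hy hx) hoy

lemma ZFSet.IsTransitive.lift_card_rank_le (ht : t.IsTransitive) :
    lift.{u + 1} (rank t).card ≤ #t.toSet := by
  rw [← mk_Iio_ordinal]
  refine mk_le_of_surjective (f := fun z : t.toSet => ⟨rank z.1, rank_lt_of_mem z.2⟩) ?_
  rintro ⟨o, ho⟩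
  obtain ⟨z, hz, rfl⟩ := ht.exists_mem_rank_eq ho
  exact ⟨⟨z, hz⟩, rfl⟩

lemma mk_toSet_of_zOrd (hθ : ZOrd θ) : #θ.toSet = lift.{u + 1} (rank θ).card := by
  conv_lhs => rw [← (zOrd_iff_isOrdinal.1 hθ).toZFSet_rank_eq]
  rw [← Ordinal.card_toZFSet]
  exact cardinalMk_coe_sort

lemma rank_lt_of_mk_lt (ht : t.IsTransitive) (hθ : ZOrd θ) (h : #t.toSet < #θ.toSet) :
    rank t < rank θ := by
  by_contra! hle
  have := ht.lift_card_rank_le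
  rw [mk_toSet_of_zOrd hθ] at h
  exact ((lift_le.2 (Ordinal.card_le_card hle)).trans this).not_gt h

lemma rank_lt_of_mem_HSet (hθ : ZOrd θ) (hx : x ∈ HSet θ) : rank x < rank θ := by
  obtain ⟨t, ht, hxt, hlt⟩ := hx
  exact (rank_mono hxt).trans_lt (rank_lt_of_mk_lt ht hθ hlt)

lemma mem_Vclass : x ∈ Vclass β ↔ rank x < β := Iff.rfl

lemma mem_Vclass_of_mem (hx : x ∈ Vclass β) (hy : t ∈ x) : t ∈ Vclass β :=
  (rank_lt_of_mem hy).trans hx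

lemma mem_Vclass_of_subset (hx : x ∈ Vclass β) (hy : t ⊆ x) : t ∈ Vclass β :=
  (rank_mono hy).trans_lt hx

lemma union_mem_Vclass (hx : x ∈ Vclass β) (ht : t ∈ Vclass β) : x ∪ t ∈ Vclass β := by
  simpa [mem_Vclass, rank_union] using And.intro hx ht

lemma powerset_mem_Vclass (hβ : IsSuccPrelimit β) (hx : x ∈ Vclass β) :
    powerset x ∈ Vclass β := by
  simpa [mem_Vclass, rank_powerset] using hβ.succ_lt hx

lemma singleton_mem_Vclass (hβ : IsSuccPrelimit β) (hx : x ∈ Vclass β) : {x} ∈ Vclass β := by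
  simpa [mem_Vclass, rank_singleton] using hβ.succ_lt hx

lemma exists_isInjCode_mem_Vclass (hβ : IsSuccPrelimit β) (ht : t ∈ Vclass β)
    (hw : w ∈ Vclass β) (h : #t.toSet ≤ #w.toSet) : ∃ f ∈ Vclass β, IsInjCode f t w := by
  obtain ⟨f, hf, hsub⟩ := exists_isInjCode_subset h
  have hV := powerset_mem_Vclass hβ (powerset_mem_Vclass hβ (union_mem_Vclass ht hw))
  exact ⟨f, mem_Vclass_of_subset hV hsub, hf⟩

end RankAndCardinality

section DefinabilityInVclass

variable {R : Set ZFSet.{u}} {β : Ordinal.{u}} {v : ℕ → ZFSet.{u}}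

lemma forall_update_mem_Vclass (hv : ∀ i, v i ∈ Vclass β) {k : ℕ} {x : ZFSet.{u}}
    (hx : x ∈ Vclass β) : ∀ i, update v k x i ∈ Vclass β :=
  (forall_update_iff v fun _ y => y ∈ Vclass β).2 ⟨hx, fun i _ => hv i⟩

lemma IsDeltaZero.satIn_Vclass_iff {φ : SF} (hφ : IsDeltaZero φ) (hv : ∀ i, v i ∈ Vclass β) :
    SatIn R (Vclass β) φ v ↔ SatIn R Set.univ φ v :=
  hφ.satIn_iff (fun _ hx _ hy => mem_Vclass_of_mem hx hy) hv

lemma satIn_Vclass_ball {φ : SF} {k j : ℕ} (hkj : k ≠ j) (hv : ∀ i, v i ∈ Vclass β) :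
    SatIn R (Vclass β) (ball k j φ) v ↔ ∀ x ∈ v j, SatIn R (Vclass β) φ (update v k x) := by
  rw [satIn_ball hkj]
  exact forall_congr' fun x => ⟨fun h hx => h (mem_Vclass_of_mem (hv j) hx) hx, fun h _ => h⟩

def cardLeF (t w n : ℕ) : SF := .ex n (injCodeF n t w (n + 1))

lemma satIn_cardLeF (hβ : IsSuccPrelimit β) (hv : ∀ i, v i ∈ Vclass β) {t w n : ℕ}
    (ht : t < n) (hw : w < n) :
    SatIn R (Vclass β) (cardLeF t w n) v ↔ #(v t).toSet ≤ #(v w).toSet := by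
  have hcode : ∀ f ∈ Vclass β,
      SatIn R (Vclass β) (injCodeF n t w (n + 1)) (update v n f) ↔ IsInjCode f (v t) (v w) :=
    fun f hf => by
      rw [(isDeltaZero_injCodeF ..).satIn_Vclass_iff (forall_update_mem_Vclass hv hf),
        satIn_injCodeF (by omega) (by omega) (by omega)]
      simp (disch := omega) [update_of_ne]
  simp only [cardLeF, satIn_ex]
  refine ⟨fun ⟨f, hf, h⟩ => ((hcode f hf).1 h).mk_le, fun h => ?_⟩
  obtain ⟨f, hf, hcf⟩ := exists_isInjCode_mem_Vclass hβ (hv t) (hv w) h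
  exact ⟨f, hf, (hcode f hf).2 hcf⟩

def isCardinalF (x n : ℕ) : SF := (isOrdinalF x n).and (ball n x (.not (cardLeF x n (n + 1))))

lemma satIn_isCardinalF (hβ : IsSuccPrelimit β) (hv : ∀ i, v i ∈ Vclass β) {x n : ℕ}
    (hx : x < n) : SatIn R (Vclass β) (isCardinalF x n) v ↔ ZCard (v x) := by
  rw [isCardinalF, satIn_and, (isDeltaZero_isOrdinalF ..).satIn_Vclass_iff hv,
    satIn_isOrdinalF hx, satIn_Vclass_ball (by omega) hv, ZCard]
  refine and_congr_right fun _ => forall₂_congr fun y hy => ?_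
  rw [satIn_not, satIn_cardLeF hβ (forall_update_mem_Vclass hv (mem_Vclass_of_mem (hv x) hy))
    (by omega) (by omega), not_le]
  simp (disch := omega) [update_of_ne]

def memHSetF (x m n : ℕ) : SF :=
  .ex n ((isTransitiveF n (n + 1)).and ((subsetF x n (n + 1)).and (.not (cardLeF m n (n + 1)))))

lemma satIn_memHSetF (hβ : IsSuccPrelimit β) (hv : ∀ i, v i ∈ Vclass β) {x m n : ℕ}
    (hx : x < n) (hm : m < n) (hvm : ZOrd (v m)) :
    SatIn R (Vclass β) (memHSetF x m n) v ↔ v x ∈ HSet (v m) := by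
  have key : ∀ t ∈ Vclass β, SatIn R (Vclass β) ((isTransitiveF n (n + 1)).and
      ((subsetF x n (n + 1)).and (.not (cardLeF m n (n + 1))))) (update v n t) ↔
      t.IsTransitive ∧ v x ⊆ t ∧ #t.toSet < #(v m).toSet := fun t ht => by
    have hv' := forall_update_mem_Vclass hv (k := n) ht
    rw [satIn_and, satIn_and, satIn_not, satIn_cardLeF hβ hv' (by omega) (by omega),
      (isDeltaZero_isTransitiveF ..).satIn_Vclass_iff hv', satIn_isTransitiveF (by omega),
      (isDeltaZero_subsetF ..).satIn_Vclass_iff hv', satIn_subsetF (by omega) (by omega), not_le]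
    simp (disch := omega) [update_of_ne]
  rw [memHSetF, satIn_ex]
  refine ⟨fun ⟨t, ht, h⟩ => ⟨t, (key t ht).1 h⟩, fun ⟨t, h⟩ => ?_⟩
  have ht : t ∈ Vclass β :=
    (rank_lt_of_mk_lt h.1 hvm h.2.2).trans (hv m)
  exact ⟨t, ht, (key t ht).2 h⟩

end DefinabilityInVclass

namespace SF

/-- Relativization of the quantifiers of `φ` to `H(v N)`. -/
def relH (N : ℕ) : SF → SF
  | .ex k φ => .ex k ((memHSetF k N (N + 1)).and (φ.relH N))
  | .not φ => .not (φ.relH N)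
  | .and φ ψ => .and (φ.relH N) (ψ.relH N)
  | .mem i j => .mem i j
  | .eq i j => .eq i j
  | .pred i => .pred i

end SF

lemma satIn_relH {R : Set ZFSet.{u}} {β : Ordinal.{u}} (hβ : IsSuccPrelimit β) {N : ℕ} :
    ∀ (φ : SF) {v : ℕ → ZFSet.{u}}, φ.bvBound ≤ N → (∀ i, v i ∈ Vclass β) → ZOrd (v N) →
      HSet (v N) ⊆ Vclass β →
      (SatIn R (Vclass β) (φ.relH N) v ↔ SatIn R (HSet (v N)) φ v)
  | .mem _ _, _, _, _, _, _ | .eq _ _, _, _, _, _, _ | .pred _, _, _, _, _, _ => .rfl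
  | .not φ, _, hφ, hv, hN, hH => not_congr (satIn_relH hβ φ hφ hv hN hH)
  | .and φ ψ, _, hφ, hv, hN, hH =>
    and_congr (satIn_relH hβ φ (le_of_max_le_left hφ) hv hN hH)
      (satIn_relH hβ ψ (le_of_max_le_right hφ) hv hN hH)
  | .ex k φ, v, hφ, hv, hN, hH => by
    have hk : k < N := lt_of_lt_of_le (by simp [SF.bvBound]) hφ
    have hvN : ∀ x, update v k x N = v N := fun x => update_of_ne (by omega) _ _
    simp only [SF.relH, satIn_ex, satIn_and]
    constructor
    · rintro ⟨x, hx, hxH, h⟩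
      have hv' := forall_update_mem_Vclass hv (k := k) hx
      rw [satIn_memHSetF hβ hv' (by omega) (by omega) (by rwa [hvN]), hvN, update_self] at hxH
      rw [satIn_relH hβ φ (le_of_max_le_right hφ) hv' (by rwa [hvN]) (by rwa [hvN]), hvN] at h
      exact ⟨x, hxH, h⟩
    · rintro ⟨x, hxH, h⟩
      have hv' := forall_update_mem_Vclass hv (k := k) (hH hxH)
      refine ⟨x, hH hxH, ?_, ?_⟩
      · rwa [satIn_memHSetF hβ hv' (by omega) (by omega) (by rwa [hvN]), hvN, update_self]
      · rwa [satIn_relH hβ φ (le_of_max_le_right hφ) hv' (by rwa [hvN]) (by rwa [hvN]), hvN]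

lemma fv_isCardinalF (x n : ℕ) : (isCardinalF x n).fv ⊆ {x} := by
  intro i hi
  simp [isCardinalF, cardLeF, isOrdinalF, isTransitiveF, injCodeF, pairMemF, pairEqF, upairEqF,
    SF.fv, SF.ball, SF.bex, SF.imp, SF.or] at hi
  simp
  omega

lemma fv_memHSetF (x m n : ℕ) : (memHSetF x m n).fv ⊆ {x, m} := by
  intro i hi
  simp [memHSetF, cardLeF, subsetF, isTransitiveF, injCodeF, pairMemF, pairEqF, upairEqF,
    SF.fv, SF.ball, SF.bex, SF.imp, SF.or] at hi
  simp
  omega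

lemma fv_relH (N : ℕ) : ∀ φ : SF, (φ.relH N).fv ⊆ φ.fv ∪ {N}
  | .mem _ _ | .eq _ _ | .pred _ => Set.subset_union_left
  | .not φ => fv_relH N φ
  | .and φ ψ => Set.union_subset ((fv_relH N φ).trans (Set.union_subset_union_left _
      Set.subset_union_left)) ((fv_relH N ψ).trans (Set.union_subset_union_left _
      Set.subset_union_right))
  | .ex k φ => by
    rintro i ⟨hi | hi, hik⟩
    · rcases fv_memHSetF k N (N + 1) hi with rfl | rfl
      · exact absurd rfl hik
      · exact .inr rfl
    · rcases fv_relH N φ hi with hi | hi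
      · exact .inl ⟨hi, hik⟩
      · exact .inr hi

section Reflection

@[simp] lemma val2_zero {a b : ZFSet.{u}} : val2 a b 0 = a := rfl
@[simp] lemma val2_one {a b : ZFSet.{u}} : val2 a b 1 = b := rfl

variable {R : Set ZFSet.{u}} {β : Ordinal.{u}}

def isSuccPrelimitF : SF := all 0 (.ex 1 (.mem 0 1))

lemma satIn_isSuccPrelimitF {v : ℕ → ZFSet.{u}} :
    SatIn R (Vclass β) isSuccPrelimitF v ↔ IsSuccPrelimit β := by
  simp only [isSuccPrelimitF, satIn_all, satIn_ex, satIn_mem, update_self,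
    update_of_ne (show (0 : ℕ) ≠ 1 by decide)]
  refine ⟨fun h => isSuccPrelimit_of_succ_lt fun o ho => ?_,
    fun hβ x hx => ⟨{x}, singleton_mem_Vclass hβ hx, mem_singleton.2 rfl⟩⟩
  obtain ⟨y, hy, hoy⟩ := h o.toZFSet (by rwa [mem_Vclass, Ordinal.rank_toZFSet])
  exact (succ_le_of_lt (Ordinal.rank_toZFSet o ▸ rank_lt_of_mem hoy)).trans_lt hy

def inCarrierF (i c : ℕ) : SF := .ex c (.eq c i)

lemma satIn_inCarrierF {S : Set ZFSet.{u}} {v : ℕ → ZFSet.{u}} {i c : ℕ} (h : c ≠ i) :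
    SatIn R S (inCarrierF i c) v ↔ v i ∈ S := by
  simp [inCarrierF, update_of_ne h.symm]

def reflectF (φ : SF) (N : ℕ) : SF :=
  isSuccPrelimitF.and ((inCarrierF 0 2).and ((inCarrierF 1 2).and ((isCardinalF 1 2).and
    (.ex N ((isCardinalF N (N + 1)).and ((SF.mem 1 N).and (φ.relH N)))))))

lemma fv_reflectF {φ : SF} (hφ : φ.fv ⊆ {0, 1}) (N : ℕ) :
    (reflectF φ N).fv ⊆ {0, 1} := by
  intro i hi
  simp only [reflectF, SF.fv, Set.mem_union, Set.mem_sdiff] at hi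
  rcases hi with hi | hi | hi | hi | ⟨hi | hi | hi, hiN⟩
  · simp [isSuccPrelimitF, SF.all, SF.fv] at hi
  · simp_all [inCarrierF, SF.fv]
  · simp_all [inCarrierF, SF.fv]
  · simp [fv_isCardinalF 1 2 hi]
  · exact absurd (fv_isCardinalF _ _ hi) hiN
  · simp_all
  · exact hφ ((fv_relH N φ hi).resolve_right hiN)

lemma satIn_reflectF {φ : SF} (hφ : φ.fv ⊆ {0, 1}) {N : ℕ} (hN : 2 ≤ N) (hφN : φ.bvBound ≤ N)
    {A κ : ZFSet.{u}} :
    SatIn R (Vclass β) (reflectF φ N) (val2 A κ) ↔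
      IsSuccPrelimit β ∧ A ∈ Vclass β ∧ κ ∈ Vclass β ∧ ZCard κ ∧
        ∃ θ ∈ Vclass β, ZCard θ ∧ κ ∈ θ ∧ SatIn R (HSet θ) φ (val2 A κ) := by
  simp only [reflectF, satIn_and, satIn_isSuccPrelimitF, satIn_inCarrierF (show 2 ≠ 0 by decide),
    satIn_inCarrierF (show 2 ≠ 1 by decide), val2_zero, val2_one]
  refine and_congr_right fun hβ => and_congr_right fun hA => and_congr_right fun hκ => ?_
  have hv : ∀ i, val2 A κ i ∈ Vclass β := fun i => by
    unfold val2
    split_ifs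
    exacts [hA, hκ, mem_Vclass_of_subset hκ (empty_subset _)]
  rw [satIn_isCardinalF hβ hv (by decide), satIn_ex]
  refine and_congr_right fun _ => exists_congr fun θ => and_congr_right fun hθ => ?_
  have hv' := forall_update_mem_Vclass hv (k := N) hθ
  have hvN : update (val2 A κ) N θ N = θ := update_self ..
  rw [satIn_and, satIn_isCardinalF hβ hv' (by omega), hvN]
  refine and_congr_right fun hθc => ?_
  rw [satIn_and, satIn_mem, satIn_relH hβ φ hφN hv' (by rw [hvN]; exact hθc.1)
    (by rw [hvN]; exact fun x hx => (rank_lt_of_mem_HSet hθc.1 hx).trans hθ),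
    hvN, update_of_ne (by omega)]
  exact and_congr_right fun _ => satIn_congr φ fun i hi => update_of_ne (by
    rcases hφ hi with rfl | rfl <;> omega) ..

end Reflection

section Shrewd

variable {κ : ZFSet.{u}}

lemma Shrewd.nonempty (h : Shrewd κ) : ∃ κ', κ' ∈ κ := by
  obtain ⟨κ', _, hκ', -⟩ := h.2 (.eq 0 0) ∅ ∅ (by simp [SF.fv]) zOrd_empty
    (fun y hy => absurd hy (notMem_empty y)) rfl
  exact ⟨κ', hκ'⟩

lemma Shrewd.exists_rank_lt (h : Shrewd κ) {x : ZFSet.{u}} (hx : rank x < rank κ) :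
    ∃ κ' ∈ κ, rank x < rank κ' := by
  obtain ⟨κ', _, hκ', -, hs⟩ := h.2 (.ex 2 (.mem 2 0)) ∅ {x} (by simp [SF.fv])
    zOrd_empty (by simpa using hx) (satIn_ex.2 ⟨x, by simpa [mem_Vclass] using hx, by simp⟩)
  obtain ⟨y, -, hy⟩ := satIn_ex.1 hs
  obtain ⟨hyx, hy⟩ := mem_sep.1 (show y ∈ Vres {x} κ' by simpa using hy)
  exact ⟨κ', hκ', mem_singleton.1 hyx ▸ hy⟩

lemma Shrewd.isSuccLimit_rank (h : Shrewd κ) : IsSuccLimit (rank κ) := by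
  obtain ⟨κ', hκ'⟩ := h.nonempty
  refine Ordinal.isSuccLimit_iff.2 ⟨(rank_lt_of_mem hκ').ne_bot, isSuccPrelimit_of_succ_lt
    fun o ho => ?_⟩
  obtain ⟨κ'', hκ'', ho'⟩ := h.exists_rank_lt (x := o.toZFSet) (by rwa [Ordinal.rank_toZFSet])
  rw [Ordinal.rank_toZFSet] at ho'
  exact (succ_le_of_lt ho').trans_lt (rank_lt_of_mem hκ'')

lemma Shrewd.infCard (h : Shrewd κ) : InfCard κ :=
  ⟨h.1, omega_subset_of_omega0_le h.1.1 (Ordinal.omega0_le_of_isSuccLimit h.isSuccLimit_rank)⟩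

end Shrewd

/-- Every shrewd cardinal is weakly shrewd. -/
theorem shrewd_weaklyShrewd (κ : ZFSet.{u}) (h : Shrewd κ) : WeaklyShrewd κ := by
  refine ⟨h.infCard, fun φ θ A hφ hθ hκθ hA hsat => ?_⟩
  have hN2 : 2 ≤ max φ.bvBound 2 := le_max_right ..
  have hNφ : φ.bvBound ≤ max φ.bvBound 2 := le_max_left ..
  set α := (rank θ + Ordinal.omega0).toZFSet
  have hβ : IsSuccLimit (rank κ + rank α) := by
    rw [Ordinal.rank_toZFSet]
    exact Ordinal.isSuccLimit_add _ (Ordinal.isSuccLimit_add _ Ordinal.isSuccLimit_omega0)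
  have hθV : θ ∈ Vclass (rank κ + rank α) := by
    rw [mem_Vclass, Ordinal.rank_toZFSet, ← add_assoc]
    exact le_add_self.trans_lt (lt_add_of_pos_right _ Ordinal.omega0_pos)
  have hκV := mem_Vclass_of_mem hθV hκθ
  obtain ⟨κ', _, hκ', -, hs⟩ := h.2 (reflectF φ (max φ.bvBound 2)) α A (fv_reflectF hφ _)
    (zOrd_iff_isOrdinal.2 (isOrdinal_toZFSet _)) (fun y hy => rank_lt_of_mem (hA hy))
    ((satIn_reflectF hφ hN2 hNφ).2 ⟨hβ.isSuccPrelimit, mem_Vclass_of_subset hκV hA, hκV, h.1,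
      θ, hθV, hθ, hκθ, hsat⟩)
  obtain ⟨-, -, -, hκ'c, θ', -, hθ'c, hκ'θ', hsat'⟩ := (satIn_reflectF hφ hN2 hNφ).1 hs
  refine ⟨κ', θ', hκ'c, hθ'c, hκ'θ', hκ', ?_⟩
  have hκo := zOrd_iff_isOrdinal.1 h.1.1
  rw [← Vres_eq_inter (hκo.mem hκ') fun y hy => hκo.mem (hA hy)]
  exact hsat'
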